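/- Let n and α be positive integers with α < n < 2α, and let the graph G' arise from F(n,α) by adding an edge uv between two non-adjacent vertices u and v of F(n,α), both distinct from the special cutvertex x_0 of F(n,α). Then either the independence number of G' is strictly less than α, or the independence number of G' equals α and ♯α(G') < f(n,α). -/

import Mathlib

open Finset

/-- A finset of vertices is independent in `G`: pairwise non-adjacent. -/
def IsIndepFinset {V : Type*} (G : SimpleGraph V) (s : Finset V) : Prop :=
  ∀ ⦃u⦄, u ∈ s → ∀ ⦃v⦄, v ∈ s → u ≠ v → ¬ G.Adj u v

/-- The independence number of a finite graph. -/
noncomputable def indepNumber {V : Type*} [Fintype V] (G : SimpleGraph V) : ℕ :=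
  sSup {k | ∃ s : Finset V, IsIndepFinset G s ∧ s.card = k}

/-- The number `♯α(G)` of maximum independent sets of `G`. -/
noncomputable def numMaxIndep {V : Type*} [Fintype V] (G : SimpleGraph V) : ℕ :=
  Set.ncard {s : Finset V | IsIndepFinset G s ∧ s.card = indepNumber G}

/-- The number `♯α(G,u)` of maximum independent sets of `G` containing `u`. -/
noncomputable def numMaxIndepOn {V : Type*} [Fintype V] (G : SimpleGraph V) (u : V) : ℕ :=
  Set.ncard {s : Finset V | IsIndepFinset G s ∧ s.card = indepNumber G ∧ u ∈ s}

/-- `g(n,α) = ⌊n/α⌋^(α − n mod α) ⌈n/α⌉^(n mod α)`. -/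
def gFun (n a : ℕ) : ℕ := (n / a) ^ (a - n % a) * ((n + a - 1) / a) ^ (n % a)

/-- `t(n,α) = ∏_{i=1}^{α−1} (|C_i| − 1)`, where `|C_i| = ⌊n/α⌋ + 1` for `i < n mod α`
and `|C_i| = ⌊n/α⌋` otherwise. -/
def tFun (n a : ℕ) : ℕ := ∏ i ∈ Finset.Ico 1 a, (n / a + (if i < n % a then 1 else 0) - 1)

/-- `f(n,α) = g(n−1,α) + t(n,α)`. -/
def fFun (n a : ℕ) : ℕ := gFun (n - 1) a + tFun n a

/-- `G(n,α)`: complement of the Turán graph, i.e. the disjoint union of `α` cliques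
(the residue classes mod `α`), each of order `⌈n/α⌉` or `⌊n/α⌋`. -/
def Ggraph (n a : ℕ) : SimpleGraph (Fin n) where
  Adj v w := v ≠ w ∧ v.val % a = w.val % a
  symm := ⟨by intro v w h; exact ⟨h.1.symm, h.2.symm⟩⟩
  loopless := ⟨by intro v h; exact h.1 rfl⟩

/-- `F(n,α)`: `G(n,α)` plus the edges `x₀x₁, …, x₀x_{α−1}`, where `x_i` is the vertex `i`
of the clique `C_i` (the residue class of `i` mod `α`); `x₀ = 0` is the special cutvertex,
lying in the clique `C₀` of order `⌈n/α⌉`. -/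
def Fgraph (n a : ℕ) : SimpleGraph (Fin n) where
  Adj v w := v ≠ w ∧
    (v.val % a = w.val % a ∨ (v.val = 0 ∧ w.val < a) ∨ (w.val = 0 ∧ v.val < a))
  symm := ⟨by intro v w h; exact ⟨h.1.symm, by tauto⟩⟩
  loopless := ⟨by intro v h; exact h.1 rfl⟩

/-!
For `α < n < 2α` the clique of `α - 1` in `F(n,α)` is the single vertex `α - 1`, which is
adjacent to `x₀ = 0`. Hence a maximum independent set of `F(n,α)` avoids `x₀` and meets every
clique exactly once; it is determined by its vertices above `α`, so there are at most
`2^(n-1-α) = g(n-1,α) ≤ f(n,α)` of them. The edge `uv` joins two different cliques away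
from `x₀`, so `α(G') ≤ α`, and if equality holds, the maximum independent sets of `G'` are
among those of `F(n,α)` but miss the one through `u` and `v`.
-/

section IndependentSets

variable {V : Type*} {G H : SimpleGraph V} {s : Finset V}

lemma IsIndepFinset.anti (hGH : G ≤ H) (hs : IsIndepFinset H s) : IsIndepFinset G s :=
  fun _ hu _ hv huv hadj => hs hu hv huv (hGH hadj)

variable [Fintype V]

lemma IsIndepFinset.card_le_indepNumber (hs : IsIndepFinset G s) : s.card ≤ indepNumber G :=
  le_csSup ⟨Fintype.card V, by rintro _ ⟨t, -, rfl⟩; exact t.card_le_univ⟩ ⟨s, hs, rfl⟩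

lemma indepNumber_le {k : ℕ} (h : ∀ s, IsIndepFinset G s → s.card ≤ k) : indepNumber G ≤ k :=
  csSup_le ⟨0, ∅, fun _ h => absurd h (notMem_empty _), card_empty⟩
    (by rintro _ ⟨s, hs, rfl⟩; exact h s hs)

lemma indepNumber_anti (hGH : G ≤ H) : indepNumber H ≤ indepNumber G :=
  indepNumber_le fun _ hs => (hs.anti hGH).card_le_indepNumber

lemma numMaxIndep_lt_of_le (hGH : G ≤ H) (hα : indepNumber H = indepNumber G)
    (hs : IsIndepFinset G s) (hsc : s.card = indepNumber G) (hsH : ¬ IsIndepFinset H s) :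
    numMaxIndep H < numMaxIndep G := by
  rw [numMaxIndep, numMaxIndep, hα]
  exact Set.ncard_lt_ncard ⟨fun t ht => ⟨ht.1.anti hGH, ht.2⟩, fun h => hsH (h ⟨hs, hsc⟩).1⟩

end IndependentSets

lemma Nat.eq_mod_or_eq_mod_add_of_lt_two_mul {x a : ℕ} (h : x < 2 * a) :
    x = x % a ∨ x = x % a + a := by
  rcases lt_or_ge x a with hxa | hax
  · exact Or.inl (Nat.mod_eq_of_lt hxa).symm
  · rw [Nat.mod_eq_sub_mod hax, Nat.mod_eq_of_lt (by omega)]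
    omega

lemma Nat.mod_injOn_Icc_one (a : ℕ) : Set.InjOn (· % a) (Set.Icc 1 a) := by
  rintro x ⟨hx1, hxa⟩ y ⟨hy1, hya⟩ (h : x % a = y % a)
  have hx := Nat.eq_mod_or_eq_mod_add_of_lt_two_mul (x := x) (a := a) (by omega)
  have hy := Nat.eq_mod_or_eq_mod_add_of_lt_two_mul (x := y) (a := a) (by omega)
  omega

lemma gFun_pred_of_lt_two_mul {n a : ℕ} (han : a < n) (hn : n < 2 * a) :
    gFun (n - 1) a = 2 ^ (n - 1 - a) := by
  have hdiv : (n - 1) / a = 1 := Nat.div_eq_of_lt_le (by omega) (by omega)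
  have hmod : (n - 1) % a = n - 1 - a := by
    rw [Nat.mod_eq_sub_mod (by omega), Nat.mod_eq_of_lt (by omega)]
  rw [gFun, hdiv, hmod, one_pow, one_mul]
  obtain h | h := Nat.eq_zero_or_pos (n - 1 - a)
  · rw [h, pow_zero, pow_zero]
  · rw [Nat.div_eq_of_lt_le (k := 2) (by omega) (by omega)]

section Fgraph

variable {n a : ℕ} {s t : Finset (Fin n)}

lemma IsIndepFinset.injOn_mod_of_Fgraph (hs : IsIndepFinset (Fgraph n a) s) :
    Set.InjOn (fun x : Fin n => x.val % a) s := fun x hx y hy hxy => by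
  by_contra hne
  exact hs hx hy hne ⟨hne, Or.inl hxy⟩

lemma isIndepFinset_Fgraph_of_injOn (h0 : ∀ x ∈ s, x.val ≠ 0)
    (hinj : Set.InjOn (fun x : Fin n => x.val % a) s) : IsIndepFinset (Fgraph n a) s := by
  rintro x hx y hy hne ⟨-, hxy | ⟨hx0, -⟩ | ⟨hy0, -⟩⟩
  exacts [hne (hinj hx hy hxy), h0 x hx hx0, h0 y hy hy0]

lemma IsIndepFinset.card_le_of_Fgraph (ha : 0 < a) (hs : IsIndepFinset (Fgraph n a) s) :
    s.card ≤ a := by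
  simpa using card_le_card_of_injOn (t := range a) _
    (fun x _ => mem_range.2 (Nat.mod_lt x.val ha)) hs.injOn_mod_of_Fgraph

lemma IsIndepFinset.image_mod_of_Fgraph (ha : 0 < a) (hs : IsIndepFinset (Fgraph n a) s)
    (hsc : s.card = a) : s.image (fun x : Fin n => x.val % a) = range a :=
  eq_of_subset_of_card_le (image_subset_iff.2 fun x _ => mem_range.2 (Nat.mod_lt _ ha))
    (by rw [card_range, card_image_of_injOn hs.injOn_mod_of_Fgraph, hsc])

/-- The missing residues are filled with vertices among `1, …, α`. -/
lemma exists_isIndepFinset_Fgraph_superset (ha : 0 < a) (han : a < n) {P : Finset (Fin n)}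
    (hP0 : ∀ x ∈ P, x.val ≠ 0) (hPinj : Set.InjOn (fun x : Fin n => x.val % a) P) :
    ∃ s, P ⊆ s ∧ IsIndepFinset (Fgraph n a) s ∧ s.card = a := by
  set Q := univ.filter fun x : Fin n => (1 ≤ x.val ∧ x.val ≤ a) ∧ ∀ y ∈ P, y.val % a ≠ x.val % a
  have hQinj : Set.InjOn (fun x : Fin n => x.val % a) Q :=
    (Nat.mod_injOn_Icc_one a).comp Fin.val_injective.injOn fun x hx => (mem_filter.1 hx).2.1
  have hdisj : Disjoint P Q :=
    disjoint_left.2 fun x hxP hxQ => (mem_filter.1 hxQ).2.2 x hxP rfl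
  have hindep : IsIndepFinset (Fgraph n a) (P ∪ Q) := by
    refine isIndepFinset_Fgraph_of_injOn ?_ ?_
    · intro x hx
      rcases mem_union.1 hx with hx | hx
      exacts [hP0 x hx, Nat.one_le_iff_ne_zero.1 (mem_filter.1 hx).2.1.1]
    · rw [coe_union, Set.injOn_union (disjoint_coe.2 hdisj)]
      exact ⟨hPinj, hQinj, fun x hx y hy => (mem_filter.1 hy).2.2 x hx⟩
  refine ⟨P ∪ Q, subset_union_left, hindep, (hindep.card_le_of_Fgraph ha).antisymm ?_⟩
  have hcover : range a ⊆ (P ∪ Q).image fun x : Fin n => x.val % a := by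
    intro r hr
    rw [mem_range] at hr
    by_cases hP : ∃ y ∈ P, y.val % a = r
    · obtain ⟨y, hy, rfl⟩ := hP
      exact mem_image_of_mem _ (mem_union_left _ hy)
    push Not at hP
    obtain ⟨x, hxI, rfl⟩ : ∃ x : Fin n, (1 ≤ x.val ∧ x.val ≤ a) ∧ x.val % a = r := by
      rcases Nat.eq_zero_or_pos r with rfl | hr0
      · exact ⟨⟨a, han⟩, ⟨hr, le_rfl⟩, Nat.mod_self a⟩
      · exact ⟨⟨r, by omega⟩, ⟨hr0, hr.le⟩, Nat.mod_eq_of_lt hr⟩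
    exact mem_image_of_mem _ (mem_union_right _ (mem_filter.2 ⟨mem_univ x, hxI, hP⟩))
  simpa using card_le_card hcover |>.trans card_image_le

lemma indepNumber_Fgraph (ha : 0 < a) (han : a < n) : indepNumber (Fgraph n a) = a := by
  obtain ⟨s, -, hs, hsc⟩ := exists_isIndepFinset_Fgraph_superset (P := ∅) ha han (by simp) (by simp)
  exact (indepNumber_le fun _ ht => ht.card_le_of_Fgraph ha).antisymm (hsc ▸ hs.card_le_indepNumber)

/-- The vertex `α - 1` is alone in its clique, hence lies in every maximum independent set,
and it is adjacent to `x₀`. -/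
lemma IsIndepFinset.val_ne_zero_of_Fgraph (han : a < n) (hn : n < 2 * a) (hs : IsIndepFinset (Fgraph n a) s)
    (hsc : s.card = a) {x : Fin n} (hx : x ∈ s) : x.val ≠ 0 := by
  have ha : 1 < a := by omega
  obtain ⟨y, hy, hya⟩ :=
    mem_image.1 (hs.image_mod_of_Fgraph (by omega) hsc ▸ mem_range.2 (by omega : a - 1 < a))
  have hy' : y.val = a - 1 := by
    rcases Nat.eq_mod_or_eq_mod_add_of_lt_two_mul (by omega : y.val < 2 * a) with h | h <;> omega
  intro hx0
  have hxy : x ≠ y := fun h => by subst h; omega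
  exact hs hx hy hxy ⟨hxy, Or.inr (Or.inl ⟨hx0, by omega⟩)⟩

lemma Fgraph.subset_of_inter_Ioi_eq (han : a < n) (hn : n < 2 * a)
    (hs : IsIndepFinset (Fgraph n a) s) (hsc : s.card = a)
    (ht : IsIndepFinset (Fgraph n a) t) (htc : t.card = a)
    (h : s ∩ Ioi ⟨a, han⟩ = t ∩ Ioi ⟨a, han⟩) : s ⊆ t := by
  intro x hx
  by_cases hxa : a < x.val
  · exact (mem_inter.1 (h ▸ mem_inter.2 ⟨hx, mem_Ioi.2 hxa⟩)).1
  obtain ⟨y, hy, hyx⟩ :=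
    mem_image.1 (ht.image_mod_of_Fgraph (by omega) htc ▸ mem_range.2 (Nat.mod_lt x.val (by omega)))
  suffices x = y from this ▸ hy
  by_cases hya : a < y.val
  · exact hs.injOn_mod_of_Fgraph hx (mem_inter.1 (h ▸ mem_inter.2 ⟨hy, mem_Ioi.2 hya⟩)).1 hyx.symm
  · have hx0 := hs.val_ne_zero_of_Fgraph han hn hsc hx
    have hy0 := ht.val_ne_zero_of_Fgraph han hn htc hy
    exact Fin.ext (Nat.mod_injOn_Icc_one a ⟨by omega, by omega⟩ ⟨by omega, by omega⟩ hyx.symm)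

lemma numMaxIndep_Fgraph_le (han : a < n) (hn : n < 2 * a) :
    numMaxIndep (Fgraph n a) ≤ 2 ^ (n - 1 - a) := by
  set B := Ioi (⟨a, han⟩ : Fin n)
  calc numMaxIndep (Fgraph n a) ≤ (B.powerset : Set (Finset (Fin n))).ncard := by
        rw [numMaxIndep, indepNumber_Fgraph (by omega) han]
        refine Set.ncard_le_ncard_of_injOn (· ∩ B) (fun s _ => mem_powerset.2 inter_subset_right) ?_
        rintro s ⟨hs, hsc⟩ t ⟨ht, htc⟩ h
        exact (Fgraph.subset_of_inter_Ioi_eq han hn hs hsc ht htc h).antisymm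
          (Fgraph.subset_of_inter_Ioi_eq han hn ht htc hs hsc h.symm)
    _ = 2 ^ (n - 1 - a) := by rw [Set.ncard_coe_finset, card_powerset, Fin.card_Ioi]

end Fgraph

theorem addEdge_Fgraph_of_lt_two_general {n a : ℕ} (han : a < n) (hn2a : n < 2 * a)
    (u v : Fin n) (huv : u ≠ v) (hnadj : ¬ (Fgraph n a).Adj u v)
    (hu : u.val ≠ 0) (hv : v.val ≠ 0)
    (G' : SimpleGraph (Fin n))
    (hG' : G' = Fgraph n a ⊔ SimpleGraph.fromEdgeSet {s(u, v)}) :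
    indepNumber G' < a ∨ (indepNumber G' = a ∧ numMaxIndep G' < fFun n a) := by
  have ha : 0 < a := by omega
  have hF : indepNumber (Fgraph n a) = a := indepNumber_Fgraph ha han
  have hle : Fgraph n a ≤ G' := hG' ▸ le_sup_left
  rcases ((indepNumber_anti hle).trans hF.le).lt_or_eq with hlt | heq
  · exact Or.inl hlt
  obtain ⟨s, huvs, hs, hsc⟩ := exists_isIndepFinset_Fgraph_superset (P := {u, v}) ha han
    (by simp [hu, hv]) (by simpa using fun h => absurd ⟨huv, Or.inl h⟩ hnadj)
  have huvG' : G'.Adj u v := hG' ▸ Or.inr ⟨rfl, huv⟩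
  have hsG' : ¬ IsIndepFinset G' s := fun h => h (huvs (by simp)) (huvs (by simp)) huv huvG'
  refine Or.inr ⟨heq, ?_⟩
  calc numMaxIndep G' < numMaxIndep (Fgraph n a) :=
        numMaxIndep_lt_of_le hle (heq.trans hF.symm) hs (hsc.trans hF.symm) hsG'
    _ ≤ 2 ^ (n - 1 - a) := numMaxIndep_Fgraph_le han hn2a
    _ = gFun (n - 1) a := (gFun_pred_of_lt_two_mul han hn2a).symm
    _ ≤ fFun n a := Nat.le_add_right _ _

/-- **Lemma 2 (ii), case `n/α < 2`.** Let `α < n < 2α`, and let `G'` arise from `F(n,α)` by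
adding an edge `uv` between two non-adjacent vertices `u ≠ v` of `F(n,α)`, both distinct
from the special cutvertex `x₀ = 0` of `F(n,α)`. Then either `α(G') < α`, or `α(G') = α`
and `♯α(G') < f(n,α)`. -/
theorem addEdge_Fgraph_of_lt_two {n a : ℕ} (ha0 : 0 < a) (han : a < n) (hn2a : n < 2 * a)
    (u v : Fin n) (huv : u ≠ v) (hnadj : ¬ (Fgraph n a).Adj u v)
    (hu : u.val ≠ 0) (hv : v.val ≠ 0)
    (G' : SimpleGraph (Fin n))
    (hG' : G' = Fgraph n a ⊔ SimpleGraph.fromEdgeSet {s(u, v)}) :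
    indepNumber G' < a ∨ (indepNumber G' = a ∧ numMaxIndep G' < fFun n a) :=
  addEdge_Fgraph_of_lt_two_general han hn2a u v huv hnadj hu hv G' hG'
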